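/- arXiv:2012.10188 — 4 statements merged into one kernel-verified Lean document; each statement's English description precedes it below -/
import Mathlib

section
/- Let E be a general event structure with events E, consistency predicate Con on finite subsets of E (non-empty and subset-closed) and enabling relation ⊢ ⊆ Con × E (monotone in the first argument). Then the set of configurations V(E) is finite-complete: for any family A ⊆ V(E) such that every finite subfamily of A has an upper bound in V(E) (with respect to ⊆), the union ⋃A is again a configuration. -/
universe u

/-- A general event structure: events `E`, a non-empty subset-closed consistency
predicate `Con` on finite sets of events, and an enabling relation `en ⊆ Con × E`
monotone in its first argument. -/
structure GES (E : Type u) where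
  Con : Set (Set E)
  con_fin : ∀ X ∈ Con, X.Finite
  con_nonempty : Con.Nonempty
  con_down : ∀ X ∈ Con, ∀ Y ⊆ X, Y ∈ Con
  en : Set E → E → Prop
  en_con : ∀ X e, en X e → X ∈ Con
  en_mono : ∀ X Y e, en X e → X ⊆ Y → Y ∈ Con → en Y e

namespace GES

variable {E : Type u}

/-- A configuration: finitely consistent, and every event has a finite enabling set inside. -/
def Config (S : GES E) (x : Set E) : Prop :=
  (∀ Y ⊆ x, Y.Finite → Y ∈ S.Con) ∧ ∀ e ∈ x, ∃ X ⊆ x, X.Finite ∧ S.en X e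

/-- Stability: mutually consistent enabling sets are closed under intersection. -/
def Stable (S : GES E) : Prop :=
  ∀ X Y e, S.en X e → S.en Y e → (X ∪ Y ∪ {e}) ∈ S.Con → S.en (X ∩ Y) e

end GES

/-- the configurations of a general event structure are finite-complete:
if every finite subfamily of `A ⊆ V(E)` has an upper bound in `V(E)`, then `⋃₀ A` is
a configuration. -/
theorem configs_finite_complete {E : Type u} (S : GES E) (A : Set (Set E))
    (hA : ∀ u ∈ A, S.Config u)
    (hbd : ∀ B ⊆ A, B.Finite → ∃ w, S.Config w ∧ ∀ u ∈ B, u ⊆ w) :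
    S.Config (⋃₀ A) := by
  constructor
  · intro Y hY hYfin
    have hch : ∀ y ∈ Y, ∃ u ∈ A, y ∈ u := fun y hy => hY hy
    choose f hfA hfy using hch
    obtain ⟨w, hw, hub⟩ := hbd ((fun y : Y => f y y.2) '' Set.univ)
      (by rintro _ ⟨y, -, rfl⟩; exact hfA y y.2)
      (by haveI := hYfin.to_subtype; exact Set.finite_univ.image _)
    refine hw.1 Y (fun y hy => hub _ ⟨⟨y, hy⟩, trivial, rfl⟩ (hfy y hy)) hYfin
  · rintro e ⟨u, huA, heu⟩
    obtain ⟨X, hXu, hXfin, hen⟩ := (hA u huA).2 e heu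
    exact ⟨X, hXu.trans (Set.subset_sUnion_of_mem huA), hXfin, hen⟩
end

section
/- Let V ⊆ 2^E be a family of subsets of E that is finite-complete, finitely based, and coincidence-free. Define Con by: X ∈ Con iff X is finite and X ⊆ u for some u ∈ V; and define X ⊢ e iff X ∈ Con and there exists u ∈ V with e ∈ u and u ⊆ X ∪ {e}. Then (E, Con, ⊢) is a general event structure whose set of configurations is exactly V. -/
universe u

/-- a finite-complete, finitely based, coincidence-free (non-empty)
family `V ⊆ 2^E` is the configuration family of the general event structure whose
consistency and enabling relations are defined from `V` as in the statement. -/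
theorem family_is_configs_of_GES {E : Type u} (V : Set (Set E)) (hne : V.Nonempty)
    (hfc : ∀ A ⊆ V, (∀ B ⊆ A, B.Finite → ∃ w ∈ V, ∀ u ∈ B, u ⊆ w) → ⋃₀ A ∈ V)
    (hfb : ∀ u ∈ V, ∀ e ∈ u, ∃ v ∈ V, v.Finite ∧ e ∈ v ∧ v ⊆ u)
    (hcf : ∀ u ∈ V, ∀ e ∈ u, ∀ e' ∈ u, e ≠ e' → ∃ v ∈ V, v ⊆ u ∧ (e ∈ v ↔ e' ∉ v)) :
    ∃ S : GES E,
      S.Con = {X | X.Finite ∧ ∃ u ∈ V, X ⊆ u} ∧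
      S.en = (fun X e => (X.Finite ∧ ∃ u ∈ V, X ⊆ u) ∧ ∃ u ∈ V, e ∈ u ∧ u ⊆ X ∪ {e}) ∧
      ∀ x, S.Config x ↔ x ∈ V :=
 by
  classical
  refine ⟨{
    Con := {X | X.Finite ∧ ∃ u ∈ V, X ⊆ u}
    con_fin := fun X hX => hX.1
    con_nonempty := ⟨∅, Set.finite_empty, hne.choose, hne.choose_spec, Set.empty_subset _⟩
    con_down := fun X hX Y hY => ⟨hX.1.subset hY, hX.2.imp fun u hu => ⟨hu.1, hY.trans hu.2⟩⟩
    en := fun X e => (X.Finite ∧ ∃ u ∈ V, X ⊆ u) ∧ ∃ u ∈ V, e ∈ u ∧ u ⊆ X ∪ {e}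
    en_con := fun X e h => h.1
    en_mono := fun X Y e h hXY hY => ⟨hY, h.2.imp fun u hu =>
      ⟨hu.1, hu.2.1, hu.2.2.trans (Set.union_subset_union_left _ hXY)⟩⟩
  }, rfl, rfl, ?_⟩
  intro x
  constructor
  · rintro ⟨hcon, hen⟩
    have claim2 : ∀ e ∈ x, ∃ v ∈ V, v.Finite ∧ e ∈ v ∧ v ⊆ x := by
      intro e he
      obtain ⟨X, hXx, hXfin, hXe⟩ := hen e he
      obtain ⟨u, hu, heu, husub⟩ := hXe.2
      have hux : u ⊆ x := husub.trans (Set.union_subset hXx (by simpa using he))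
      obtain ⟨v, hv, hvfin, hev, hvu⟩ := hfb u hu e heu
      exact ⟨v, hv, hvfin, hev, hvu.trans hux⟩
    set A := {v ∈ V | v.Finite ∧ v ⊆ x} with hA
    have hAV : A ⊆ V := fun v hv => hv.1
    have hUnion : ⋃₀ A ∈ V := by
      apply hfc A hAV
      intro B hBA hBfin
      have hBx : ⋃₀ B ⊆ x := fun e ⟨v, hvB, hev⟩ => (hBA hvB).2.2 hev
      have hBf : (⋃₀ B).Finite := Set.Finite.sUnion hBfin (fun v hv => (hBA hv).2.1)
      obtain ⟨-, u, hu, hsub⟩ := hcon _ hBx hBf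
      exact ⟨u, hu, fun v hvB => (Set.subset_sUnion_of_mem hvB).trans hsub⟩
    have hx : ⋃₀ A = x := by
      apply Set.Subset.antisymm
      · exact fun e ⟨v, hvA, hev⟩ => hvA.2.2 hev
      · intro e he
        obtain ⟨v, hv, hvfin, hev, hvx⟩ := claim2 e he
        exact ⟨v, ⟨hv, hvfin, hvx⟩, hev⟩
    rwa [hx] at hUnion
  · intro hx
    refine ⟨fun Y hY hYf => ⟨hYf, x, hx, hY⟩, ?_⟩
    intro e he
    obtain ⟨v, hv, hvfin, hev, hvx⟩ := hfb x hx e he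
    refine ⟨v \ {e}, (Set.diff_subset).trans hvx, hvfin.diff,
      ⟨⟨hvfin.diff, x, hx, (Set.diff_subset).trans hvx⟩, v, hv, hev, ?_⟩⟩
    intro a ha
    by_cases hae : a = e
    · exact Or.inr (by simp [hae])
    · exact Or.inl ⟨ha, by simp [hae]⟩
end

section
/- In a stable event structure, the non-empty compatible configurations are closed under intersection: if u, v are configurations, u ∩ v ≠ ∅, and there exists a configuration w containing both u and v, then u ∩ v is a configuration. -/
universe u

/-- in a stable event structure, non-empty compatible configurations
are closed under intersection. -/
theorem stable_inter_config {E : Type u} (S : GES E) (hst : GES.Stable S)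
    (u v : Set E) (hu : S.Config u) (hv : S.Config v)
    (hne : (u ∩ v).Nonempty) (w : Set E) (hw : S.Config w) (huw : u ⊆ w) (hvw : v ⊆ w) :
    S.Config (u ∩ v) := by
  constructor
  · intro Y hY hYf
    exact hu.1 Y (hY.trans Set.inter_subset_left) hYf
  · intro e he
    obtain ⟨X, hXu, hXf, hXe⟩ := hu.2 e he.1
    obtain ⟨Y, hYv, hYf, hYe⟩ := hv.2 e he.2
    have hsub : X ∪ Y ∪ {e} ⊆ w := by
      intro a ha
      rcases ha with (ha | ha) | ha
      · exact huw (hXu ha)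
      · exact hvw (hYv ha)
      · exact huw (ha ▸ he.1)
    have hcon : X ∪ Y ∪ {e} ∈ S.Con :=
      hw.1 _ hsub (((hXf.union hYf).union (Set.finite_singleton e)))
    exact ⟨X ∩ Y, fun a ha => ⟨hXu ha.1, hYv ha.2⟩, hXf.inter_of_left _,
      hst X Y e hXe hYe hcon⟩
end

section
/- Let E be a locally finite, locally randomised event structure: each branching cell c carries a probability distribution q_c on its set Ω_c of maximal configurations. Then the likelihood function p(v) = ∏_{c ∈ Δ(v)} q_c(v ∩ c) on finite R-stopped configurations is multiplicative over concatenation: if v is finite R-stopped and w is finite R-stopped in the future E^v, then p(v ⊕ w) = p(v) · p_{E^v}(w), where Δ denotes the covering by branching cells. -/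
universe u

/-- An event structure with binary conflict: a causality partial order with finite
down-closures, and a symmetric irreflexive conflict relation inherited along
causality. -/
structure ES (E : Type u) where
  le : E → E → Prop
  le_refl : ∀ e, le e e
  le_antisymm : ∀ e e', le e e' → le e' e → e = e'
  le_trans : ∀ a b c, le a b → le b c → le a c
  down_fin : ∀ e, {d | le d e}.Finite
  conf : E → E → Prop
  conf_symm : ∀ e e', conf e e' → conf e' e
  conf_irrefl : ∀ e, ¬ conf e e
  conf_inherit : ∀ e e' e'', conf e e' → le e' e'' → conf e e''

namespace ES

variable {E : Type u}

/-- Immediate conflict: the only conflicting pair between the causal histories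
`⌈e⌉` and `⌈e'⌉` is `(e, e')` itself. -/
def imm (S : ES E) (e e' : E) : Prop :=
  S.conf e e' ∧ ∀ d d', S.le d e → S.le d' e' → S.conf d d' → d = e ∧ d' = e'

/-- A prefix: a set closed under causes. -/
def IsPrefix (S : ES E) (P : Set E) : Prop := ∀ e ∈ P, ∀ d, S.le d e → d ∈ P

/-- A stopping prefix: a prefix closed under immediate conflict. -/
def StopPre (S : ES E) (B : Set E) : Prop :=
  S.IsPrefix B ∧ ∀ e ∈ B, ∀ e', S.imm e e' → e' ∈ B

end ES

namespace ES

variable {E : Type u}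

/-- The causal history `⌈e⌉` of an event. -/
def down (S : ES E) (e : E) : Set E := {d | S.le d e}

/-- A configuration: down-closed and conflict-free. -/
def ESConfig (S : ES E) (x : Set E) : Prop :=
  (∀ e ∈ x, ∀ d, S.le d e → d ∈ x) ∧ ∀ e ∈ x, ∀ e' ∈ x, ¬ S.conf e e'

/-- Events of the future `E^v`: `e ∉ v` with `⌈e⌉ ∪ v` a configuration. -/
def futE (S : ES E) (v : Set E) : Set E :=
  {e | e ∉ v ∧ S.ESConfig (v ∪ S.down e)}

/-- Configurations of the future `E^v`. -/
def futConfig (S : ES E) (v w : Set E) : Prop :=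
  w ⊆ S.futE v ∧ S.ESConfig (v ∪ w)

/-- Immediate conflict in the future `E^v` (order and conflict restricted). -/
def fImm (S : ES E) (v : Set E) (e e' : E) : Prop :=
  e ∈ S.futE v ∧ e' ∈ S.futE v ∧ S.conf e e' ∧
  ∀ d ∈ S.futE v, ∀ d' ∈ S.futE v,
    S.le d e → S.le d' e' → S.conf d d' → d = e ∧ d' = e'

/-- A prefix of the future `E^v`. -/
def futPrefix (S : ES E) (v P : Set E) : Prop :=
  P ⊆ S.futE v ∧ ∀ e ∈ P, ∀ d ∈ S.futE v, S.le d e → d ∈ P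

/-- A stopping prefix of the future `E^v`. -/
def futStop (S : ES E) (v B : Set E) : Prop :=
  S.futPrefix v B ∧ ∀ e ∈ B, ∀ e', S.fImm v e e' → e' ∈ B

/-- `w` is stopped in the future `E^v`: `w` is maximal among the configurations of
its minimal stopping prefix `w*` in `E^v`. -/
def stoppedIn (S : ES E) (v w : Set E) : Prop :=
  S.futConfig v w ∧ ∃ B, S.futStop v B ∧ w ⊆ B ∧
    (∀ B', S.futStop v B' → w ⊆ B' → B ⊆ B') ∧
    ∀ w', S.futConfig v w' → w' ⊆ B → w ⊆ w' → w' = w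

/-- `w` is R-stopped in the future `E^v`: `w` is the union of an increasing
sequence whose successive differences are finite and stopped in the corresponding
futures. -/
def RStoppedIn (S : ES E) (v w : Set E) : Prop :=
  ∃ g : ℕ → Set E, g 0 = ∅ ∧ (∀ n, g n ⊆ g (n + 1)) ∧ w = ⋃ n, g n ∧
    ∀ n, (g (n + 1) \ g n).Finite ∧ S.stoppedIn (v ∪ g n) (g (n + 1) \ g n)

end ES

namespace ES

variable {E : Type u}

/-- A branching cell enabled by `v`: a minimal non-empty stopping prefix of `E^v`. -/
def cellAt (S : ES E) (v B : Set E) : Prop :=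
  S.futStop v B ∧ B.Nonempty ∧
  ∀ B', S.futStop v B' → B'.Nonempty → B' ⊆ B → B' = B

/-- `Ω_B` relative to `v`: maximal configurations of a cell `B` of `E^v`. -/
def OmegaAt (S : ES E) (v B w : Set E) : Prop :=
  S.futConfig v w ∧ w ⊆ B ∧
  ∀ w', S.futConfig v w' → w' ⊆ B → w ⊆ w' → w' = w

/-- `D` is the covering `Δ(w)` of `w` in the future `E^v`: the set of branching
cells of a valid decomposition of `w`, each step being maximal in its cell. -/
def CoverIn (S : ES E) (v w : Set E) (D : Set (Set E)) : Prop :=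
  ∃ (N : ℕ) (g : ℕ → Set E) (c : ℕ → Set E), g 0 = ∅ ∧ g N = w ∧
    (∀ n < N, g n ⊆ g (n + 1) ∧ S.cellAt (v ∪ g n) (c n) ∧
      S.OmegaAt (v ∪ g n) (c n) (g (n + 1) \ g n)) ∧
    D = c '' {n | n < N}

/-- Local finiteness: every event lies in a finite stopping prefix. -/
def LocallyFinite (S : ES E) : Prop :=
  ∀ e : E, ∃ B, S.futStop ∅ B ∧ B.Finite ∧ e ∈ B

end ES

/-! ### Auxiliary lemmas -/

namespace ES

variable {E : Type u} {S : ES E}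

lemma config_subset {X Y : Set E} (hX : S.ESConfig X) (hYX : Y ⊆ X)
    (hY : ∀ e ∈ Y, ∀ d, S.le d e → d ∈ Y) : S.ESConfig Y :=
  ⟨hY, fun e he e' he' => hX.2 e (hYX he) e' (hYX he')⟩

lemma down_mem_self (e : E) : e ∈ S.down e := S.le_refl e

lemma down_subset_of_mem {X : Set E} (hX : S.ESConfig X) {e : E} (he : e ∈ X) :
    S.down e ⊆ X := fun d hd => hX.1 e he d hd

lemma config_union_down {u : Set E} (hu : S.ESConfig u) {e : E} (he : e ∈ S.futE u) :
    S.ESConfig (u ∪ S.down e) := he.2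

/-- If `d` lies in a configuration `X` extending a configuration `b`, then `d ∈ b` or
`d` lies in the future of `b`. -/
lemma mem_futE_of_mem_config {X b : Set E} (hX : S.ESConfig X) (hb : S.ESConfig b)
    (hbX : b ⊆ X) {d : E} (hd : d ∈ X) (hdb : d ∉ b) : d ∈ S.futE b := by
  refine ⟨hdb, ?_, ?_⟩
  · intro x hx a ha
    rcases hx with hx | hx
    · exact Or.inl (hb.1 x hx a ha)
    · exact Or.inr (S.le_trans a x d ha hx)
  · intro x hx x' hx'
    have hXx : x ∈ X := by
      rcases hx with hx | hx
      · exact hbX hx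
      · exact hX.1 d hd x hx
    have hXx' : x' ∈ X := by
      rcases hx' with hx' | hx'
      · exact hbX hx'
      · exact hX.1 d hd x' hx'
    exact hX.2 x hXx x' hXx'

lemma futE_anti {u u' : Set E} (hu : S.ESConfig u) (h : u ⊆ u') :
    S.futE u' ⊆ S.futE u := by
  intro e he
  refine ⟨fun h' => he.1 (h h'), ?_, ?_⟩
  · intro x hx a ha
    rcases hx with hx | hx
    · exact Or.inl (hu.1 x hx a ha)
    · exact Or.inr (S.le_trans a x e ha hx)
  · intro x hx x' hx'
    have h1 : ∀ y, y ∈ u ∪ S.down e → y ∈ u' ∪ S.down e := by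
      intro y hy; rcases hy with hy | hy
      · exact Or.inl (h hy)
      · exact Or.inr hy
    exact he.2.2 x (h1 x hx) x' (h1 x' hx')

lemma futE_mem_notMem {u : Set E} {e : E} (he : e ∈ S.futE u) : e ∉ u := he.1

/-- measure used for minimality arguments -/
private noncomputable def mez (S : ES E) (u : Set E) (d : E) : ℕ :=
  (S.down d ∩ S.futE u).ncard

private lemma mez_finite (u : Set E) (d : E) : (S.down d ∩ S.futE u).Finite :=
  (S.down_fin d).subset Set.inter_subset_left

private lemma mez_lt {u : Set E} {a d : E} (ha : a ∈ S.futE u) (hd : d ∈ S.futE u)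
    (hle : S.le a d) (hne : a ≠ d) : S.mez u a < S.mez u d := by
  apply Set.ncard_lt_ncard _ (mez_finite u d)
  constructor
  · rintro x ⟨hx1, hx2⟩; exact ⟨S.le_trans x a d hx1 hle, hx2⟩
  · intro hsub
    have : d ∈ S.down a ∩ S.futE u := hsub ⟨S.le_refl d, hd⟩
    exact hne (S.le_antisymm a d hle this.1)

private lemma mez_le {u : Set E} {a d : E} (hle : S.le a d) :
    S.mez u a ≤ S.mez u d := by
  apply Set.ncard_le_ncard _ (mez_finite u d)
  rintro x ⟨hx1, hx2⟩; exact ⟨S.le_trans x a d hx1 hle, hx2⟩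

/-- Below any conflict in the future of `u` there is an immediate conflict. -/
lemma exists_fImm {u : Set E} {e e' : E}
    (he : e ∈ S.futE u) (he' : e' ∈ S.futE u) (hc : S.conf e e') :
    ∃ d d', d ∈ S.futE u ∧ d' ∈ S.futE u ∧ S.le d e ∧ S.le d' e' ∧ S.fImm u d d' := by
  classical
  set P : E × E → Prop := fun p =>
    p.1 ∈ S.futE u ∧ p.2 ∈ S.futE u ∧ S.le p.1 e ∧ S.le p.2 e' ∧ S.conf p.1 p.2 with hP
  have hne : {m : ℕ | ∃ p, P p ∧ S.mez u p.1 + S.mez u p.2 = m}.Nonempty :=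
    ⟨_, ⟨(e, e'), ⟨he, he', S.le_refl e, S.le_refl e', hc⟩, rfl⟩⟩
  obtain ⟨p, hp, hpm⟩ := Nat.sInf_mem hne
  refine ⟨p.1, p.2, hp.1, hp.2.1, hp.2.2.1, hp.2.2.2.1, hp.1, hp.2.1, hp.2.2.2.2, ?_⟩
  intro a ha a' ha' hle hle' hconf
  by_contra hcon
  have hP' : P (a, a') := ⟨ha, ha', S.le_trans a p.1 e hle hp.2.2.1,
    S.le_trans a' p.2 e' hle' hp.2.2.2.1, hconf⟩
  have hlt : S.mez u a + S.mez u a' < S.mez u p.1 + S.mez u p.2 := by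
    rcases not_and_or.1 hcon with h | h
    · exact Nat.add_lt_add_of_lt_of_le (mez_lt ha hp.1 hle h) (mez_le hle')
    · exact Nat.add_lt_add_of_le_of_lt (mez_le hle) (mez_lt ha' hp.2.1 hle' h)
  rw [hpm] at hlt
  have hmem : S.mez u a + S.mez u a' ∈
      {m : ℕ | ∃ p, P p ∧ S.mez u p.1 + S.mez u p.2 = m} := ⟨(a, a'), hP', rfl⟩
  exact absurd (Nat.sInf_le hmem) (Nat.not_le.2 hlt)

/-- Distinct branching cells are disjoint. -/
lemma cells_disjoint {u c c' : Set E} (hc : S.cellAt u c) (hc' : S.cellAt u c')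
    (hne : c ≠ c') : c ∩ c' = ∅ := by
  by_contra h
  have hne' : (c ∩ c').Nonempty := Set.nonempty_iff_ne_empty.2 h
  have hstop : S.futStop u (c ∩ c') := by
    refine ⟨⟨fun x hx => hc.1.1.1 hx.1, ?_⟩, ?_⟩
    · intro e he d hd hle
      exact ⟨hc.1.1.2 e he.1 d hd hle, hc'.1.1.2 e he.2 d hd hle⟩
    · intro e he e' himm
      exact ⟨hc.1.2 e he.1 e' himm, hc'.1.2 e he.2 e' himm⟩
  have h1 := hc.2.2 (c ∩ c') hstop hne' Set.inter_subset_left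
  have h2 := hc'.2.2 (c ∩ c') hstop hne' Set.inter_subset_right
  exact hne (h1.symm.trans h2)

lemma fImm_mono {u u' : Set E} (hu : S.ESConfig u) (h : u ⊆ u') {e e' : E}
    (hi : S.fImm u e e') (he : e ∈ S.futE u') (he' : e' ∈ S.futE u') :
    S.fImm u' e e' := by
  refine ⟨he, he', hi.2.2.1, ?_⟩
  intro d hd d' hd' hle hle' hconf
  exact hi.2.2.2 d (futE_anti hu h hd) d' (futE_anti hu h hd') hle hle' hconf

/-- Events of distinct cells are never in conflict. -/
lemma no_conf_between_cells {u c c' : Set E} (hc : S.cellAt u c)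
    (hc' : S.cellAt u c') (hne : c ≠ c') {e x : E} (he : e ∈ c) (hx : x ∈ c') :
    ¬ S.conf e x := by
  intro hconf
  obtain ⟨d, d', hd, hd', hle, hle', himm⟩ :=
    exists_fImm (hc.1.1.1 he) (hc'.1.1.1 hx) hconf
  have hdc : d ∈ c := hc.1.1.2 e he d hd hle
  have hd'c : d' ∈ c := hc.1.2 d hdc d' himm
  have hd'c' : d' ∈ c' := hc'.1.1.2 x hx d' hd' hle'
  have := cells_disjoint hc hc' hne
  exact absurd (Set.mem_inter hd'c hd'c') (by rw [this]; exact Set.notMem_empty d')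

/-- Any event of a cell `c` lying in a configuration extending `u ∪ w`, where
`w` is maximal in `c`, already lies in `w`. -/
lemma omega_absorb {u c w : Set E} (hu : S.ESConfig u) (hc : S.cellAt u c)
    (hw : S.OmegaAt u c w) {X : Set E} (hX : S.ESConfig X) (huX : u ⊆ X)
    (hwX : w ⊆ X) {e : E} (heX : e ∈ X) (hec : e ∈ c) : e ∈ w := by
  have hefut : e ∈ S.futE u := hc.1.1.1 hec
  set w' : Set E := w ∪ (S.down e ∩ S.futE u) with hw'
  have hsubX : u ∪ w' ⊆ X := by
    rintro x (hx | hx | hx)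
    · exact huX hx
    · exact hwX hx
    · exact hX.1 e heX x hx.1
  have hconf' : S.futConfig u w' := by
    refine ⟨?_, ?_, ?_⟩
    · rintro x (hx | hx)
      · exact hw.1.1 hx
      · exact hx.2
    · rintro x (hx | hx | hx) d hd
      · exact Or.inl (hu.1 x hx d hd)
      · rcases hw.1.2.1 x (Or.inr hx) d hd with h | h
        · exact Or.inl h
        · exact Or.inr (Or.inl h)
      · have hde : S.le d e := S.le_trans d x e hd hx.1
        by_cases hdu : d ∈ u
        · exact Or.inl hdu
        · exact Or.inr (Or.inr ⟨hde, mem_futE_of_mem_config hX hu huX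
            (hX.1 e heX d hde) hdu⟩)
    · intro x hx x' hx'
      exact hX.2 x (hsubX hx) x' (hsubX hx')
  have hw'c : w' ⊆ c := by
    rintro x (hx | hx)
    · exact hw.2.1 hx
    · exact hc.1.1.2 e hec x hx.2 hx.1
  have := hw.2.2 w' hconf' hw'c Set.subset_union_left
  rw [← this]
  exact Or.inr ⟨S.le_refl e, hefut⟩

/-- Maximal configurations of a (nonempty) cell are nonempty. -/
lemma omega_nonempty {u c w : Set E} (hu : S.ESConfig u) (hc : S.cellAt u c)
    (hw : S.OmegaAt u c w) : w.Nonempty := by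
  classical
  rw [Set.nonempty_iff_ne_empty]
  intro hwe
  obtain ⟨e, hec⟩ := hc.2.1
  have hefut : e ∈ S.futE u := hc.1.1.1 hec
  have hsne : {m : ℕ | ∃ d, (d ∈ S.down e ∩ S.futE u) ∧ S.mez u d = m}.Nonempty :=
    ⟨_, e, ⟨S.le_refl e, hefut⟩, rfl⟩
  obtain ⟨e', he', hm⟩ := Nat.sInf_mem hsne
  -- e' is le-minimal in futE u
  have hmin : ∀ d ∈ S.futE u, S.le d e' → d = e' := by
    intro d hd hle
    by_contra hne
    have hlt := mez_lt hd he'.2 hle hne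
    have hmem : S.mez u d ∈ {m : ℕ | ∃ d, (d ∈ S.down e ∩ S.futE u) ∧ S.mez u d = m} :=
      ⟨d, ⟨S.le_trans d e' e hle he'.1, hd⟩, rfl⟩
    rw [hm] at hlt
    exact absurd (Nat.sInf_le hmem) (Nat.not_le.2 hlt)
  have hcfg : S.futConfig u {e'} := by
    refine ⟨?_, ?_, ?_⟩
    · intro x hx; rw [hx]; exact he'.2
    · rintro x (hx | hx) d hd
      · exact Or.inl (hu.1 x hx d hd)
      · rw [hx] at hd
        by_cases hdu : d ∈ u
        · exact Or.inl hdu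
        · have hdfut : d ∈ S.futE u :=
            mem_futE_of_mem_config he'.2.2 hu Set.subset_union_left (Or.inr hd) hdu
          exact Or.inr (hmin d hdfut hd)
    · intro x hx x' hx'
      have hsub : u ∪ {e'} ⊆ u ∪ S.down e' := by
        rintro y (hy | hy)
        · exact Or.inl hy
        · exact Or.inr (hy ▸ S.le_refl e')
      exact he'.2.2.2 x (hsub hx) x' (hsub hx')
  have hsubc : {e'} ⊆ c := by
    intro x hx; rw [hx]; exact hc.1.1.2 e hec e' he'.2 he'.1
  have := hw.2.2 {e'} hcfg hsubc (hwe ▸ Set.empty_subset _)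
  rw [hwe] at this
  exact absurd (this ▸ rfl : e' ∈ (∅ : Set E)) (Set.notMem_empty e')

/-- **Stability of branching cells**: if `c ≠ c'` are cells at `u` and `ω` is a maximal
configuration of `c'`, then `c` is still a cell at `u ∪ ω` with the same maximal
configurations. -/
lemma stability {u c c' ω : Set E} (hu : S.ESConfig u) (hc : S.cellAt u c)
    (hc' : S.cellAt u c') (hne : c ≠ c') (hω : S.OmegaAt u c' ω) :
    S.cellAt (u ∪ ω) c ∧ ∀ w, (S.OmegaAt (u ∪ ω) c w ↔ S.OmegaAt u c w) := by
  have hdisj : c ∩ c' = ∅ := cells_disjoint hc hc' hne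
  have hnotin : ∀ x ∈ c, x ∉ c' := by
    intro x hx hx'
    exact absurd (Set.mem_inter hx hx') (by rw [hdisj]; exact Set.notMem_empty x)
  have hnoconf : ∀ e ∈ c, ∀ x ∈ c', ¬ S.conf e x :=
    fun e he x hx => no_conf_between_cells hc hc' hne he hx
  have huω : S.ESConfig (u ∪ ω) := hω.1.2
  have hωc' : ω ⊆ c' := hω.2.1
  -- membership of futE u elements below c in c
  have hcaus : ∀ e ∈ c, ∀ d, S.le d e → d ∈ u ∨ d ∈ c := by
    intro e he d hd
    by_cases hdu : d ∈ u
    · exact Or.inl hdu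
    · have hefut : e ∈ S.futE u := hc.1.1.1 he
      have hdfut : d ∈ S.futE u :=
        mem_futE_of_mem_config hefut.2 hu Set.subset_union_left (Or.inr hd) hdu
      exact Or.inr (hc.1.1.2 e he d hdfut hd)
  -- A: c ⊆ futE (u ∪ ω)
  have hA : c ⊆ S.futE (u ∪ ω) := by
    intro e he
    have hefut : e ∈ S.futE u := hc.1.1.1 he
    refine ⟨?_, ?_, ?_⟩
    · rintro (h | h)
      · exact hefut.1 h
      · exact hnotin e he (hωc' h)
    · rintro x (hx | hx) d hd
      · rcases huω.1 x hx d hd with h | h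
        · exact Or.inl (Or.inl h)
        · exact Or.inl (Or.inr h)
      · exact Or.inr (S.le_trans d x e hd hx)
    · rintro x (hx | hx) x' (hx' | hx')
      · exact huω.2 x hx x' hx'
      · -- x ∈ u ∪ ω, x' ≤ e
        rcases hx with hx | hx
        · exact hefut.2.2 x (Or.inl hx) x' (Or.inr hx')
        · -- x ∈ ω ⊆ c', x' cause of e
          rcases hcaus e he x' hx' with h | h
          · exact huω.2 x (Or.inr hx) x' (Or.inl h)
          · exact fun hconf => hnoconf x' h x (hωc' hx) (S.conf_symm x x' hconf)
      · rcases hx' with hx' | hx'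
        · exact hefut.2.2 x (Or.inr hx) x' (Or.inl hx')
        · rcases hcaus e he x hx with h | h
          · exact huω.2 x (Or.inl h) x' (Or.inr hx')
          · exact fun hconf => hnoconf x h x' (hωc' hx') hconf
      · exact hefut.2.2 x (Or.inr hx) x' (Or.inr hx')
  have hB : S.futE (u ∪ ω) ⊆ S.futE u := futE_anti hu Set.subset_union_left
  -- c is a stopping prefix at u ∪ ω
  have hstop : S.futStop (u ∪ ω) c := by
    refine ⟨⟨hA, ?_⟩, ?_⟩
    · intro e he d hd hle
      exact hc.1.1.2 e he d (hB hd) hle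
    · intro e he e' hi
      obtain ⟨d, d', hd, hd', hle, hle', himm⟩ :=
        exists_fImm (hB hi.1) (hB hi.2.1) hi.2.2.1
      have hdc : d ∈ c := hc.1.1.2 e he d hd hle
      have hd'c : d' ∈ c := hc.1.2 d hdc d' himm
      have := hi.2.2.2 d (hA hdc) d' (hA hd'c) hle hle' himm.2.2.1
      rw [← this.2]; exact hd'c
  -- stopping prefixes of u ∪ ω inside c are stopping prefixes of u
  have hback : ∀ B', S.futStop (u ∪ ω) B' → B' ⊆ c → S.futStop u B' := by
    intro B' hB' hB'c
    refine ⟨⟨fun x hx => hc.1.1.1 (hB'c hx), ?_⟩, ?_⟩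
    · intro e he d hd hle
      have hdc : d ∈ c := hc.1.1.2 e (hB'c he) d hd hle
      exact hB'.1.2 e he d (hA hdc) hle
    · intro e he e' hi
      have he'c : e' ∈ c := hc.1.2 e (hB'c he) e' hi
      exact hB'.2 e he e' (fImm_mono hu Set.subset_union_left hi (hA (hB'c he)) (hA he'c))
  have hcell : S.cellAt (u ∪ ω) c := by
    refine ⟨hstop, hc.2.1, ?_⟩
    intro B' hB' hB'ne hB'c
    exact hc.2.2 B' (hback B' hB' hB'c) hB'ne hB'c
  -- futConfig transfer for subsets of c
  have hF : ∀ w', w' ⊆ c → (S.futConfig u w' ↔ S.futConfig (u ∪ ω) w') := by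
    intro w' hw'c
    constructor
    · intro hw'
      refine ⟨fun x hx => hA (hw'c hx), ?_, ?_⟩
      · rintro x (hx | hx) d hd
        · rcases huω.1 x hx d hd with h | h
          · exact Or.inl (Or.inl h)
          · exact Or.inl (Or.inr h)
        · rcases hw'.2.1 x (Or.inr hx) d hd with h | h
          · exact Or.inl (Or.inl h)
          · exact Or.inr h
      · rintro x (hx | hx) x' (hx' | hx')
        · exact huω.2 x hx x' hx'
        · rcases hx with hx | hx
          · exact hw'.2.2 x (Or.inl hx) x' (Or.inr hx')
          · exact fun hconf => hnoconf x' (hw'c hx') x (hωc' hx) (S.conf_symm x x' hconf)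
        · rcases hx' with hx' | hx'
          · exact hw'.2.2 x (Or.inr hx) x' (Or.inl hx')
          · exact fun hconf => hnoconf x (hw'c hx) x' (hωc' hx') hconf
        · exact hw'.2.2 x (Or.inr hx) x' (Or.inr hx')
    · intro hw'
      have hXcfg : S.ESConfig (u ∪ ω ∪ w') := hw'.2
      refine ⟨fun x hx => hc.1.1.1 (hw'c hx), ?_, ?_⟩
      · rintro x (hx | hx) d hd
        · exact Or.inl (hu.1 x hx d hd)
        · rcases hcaus x (hw'c hx) d hd with h | h
          · exact Or.inl h
          · -- d ∈ c; is d ∈ u ∪ ω ∪ w'? yes since config down-closed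
            have hdX : d ∈ u ∪ ω ∪ w' := hXcfg.1 x (Or.inr hx) d hd
            rcases hdX with (hdu | hdω) | hdw
            · exact Or.inl hdu
            · exact absurd (hωc' hdω) (hnotin d h)
            · exact Or.inr hdw
      · intro x hx x' hx'
        have hsub : u ∪ w' ⊆ u ∪ ω ∪ w' := by
          rintro y (hy | hy)
          · exact Or.inl (Or.inl hy)
          · exact Or.inr hy
        exact hXcfg.2 x (hsub hx) x' (hsub hx')
  refine ⟨hcell, fun w => ?_⟩
  constructor
  · rintro ⟨h1, h2, h3⟩
    refine ⟨(hF w h2).2 h1, h2, ?_⟩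
    intro w' hw' hw'c hww'
    exact h3 w' ((hF w' hw'c).1 hw') hw'c hww'
  · rintro ⟨h1, h2, h3⟩
    refine ⟨(hF w h2).1 h1, h2, ?_⟩
    intro w' hw' hw'c hww'
    exact h3 w' ((hF w' hw'c).2 hw') hw'c hww'

/-- Explicit data of a valid decomposition. -/
def CoverData (S : ES E) (u z : Set E) (N : ℕ) (g c : ℕ → Set E) : Prop :=
  g 0 = ∅ ∧ g N = z ∧ ∀ n < N, g n ⊆ g (n + 1) ∧ S.cellAt (u ∪ g n) (c n) ∧
    S.OmegaAt (u ∪ g n) (c n) (g (n + 1) \ g n)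

/-- The product of the likelihoods along a decomposition. -/
noncomputable def seqProd (q : Set E → Set E → ℝ) (N : ℕ) (g c : ℕ → Set E) : ℝ :=
  ∏ i ∈ Finset.range N, q (c i) (g (i + 1) \ g i)

lemma coverIn_iff {v w : Set E} {D : Set (Set E)} :
    S.CoverIn v w D ↔ ∃ N g c, CoverData S v w N g c ∧ D = c '' {n | n < N} := by
  constructor
  · rintro ⟨N, g, c, h1, h2, h3, h4⟩
    exact ⟨N, g, c, ⟨h1, h2, h3⟩, h4⟩
  · rintro ⟨N, g, c, ⟨h1, h2, h3⟩, h4⟩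
    exact ⟨N, g, c, h1, h2, h3, h4⟩

section Cover

variable {u z : Set E} {N : ℕ} {g c : ℕ → Set E}

lemma CoverData.mono (hC : CoverData S u z N g c) {m n : ℕ} (hmn : m ≤ n) (hn : n ≤ N) :
    g m ⊆ g n := by
  induction n with
  | zero => rw [Nat.le_zero.1 hmn]
  | succ k ih =>
    rcases Nat.lt_or_ge m (k+1) with h | h
    · exact (ih (Nat.lt_succ_iff.1 h) (Nat.le_of_succ_le hn)).trans
        (hC.2.2 k (Nat.lt_of_succ_le hn)).1
    · rw [Nat.le_antisymm hmn h]

lemma CoverData.step_eq (hC : CoverData S u z N g c) {n : ℕ} (hn : n < N) :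
    (u ∪ g n) ∪ (g (n + 1) \ g n) = u ∪ g (n + 1) := by
  rw [Set.union_assoc, Set.union_diff_cancel (hC.2.2 n hn).1]

lemma CoverData.config (hC : CoverData S u z N g c) (hu : S.ESConfig u) :
    ∀ n ≤ N, S.ESConfig (u ∪ g n) := by
  intro n hn
  induction n with
  | zero => rw [hC.1, Set.union_empty]; exact hu
  | succ k ih =>
    have hk : k < N := Nat.lt_of_succ_le hn
    have := (hC.2.2 k hk).2.2.1.2
    rwa [hC.step_eq hk] at this

lemma CoverData.diff_subset (hC : CoverData S u z N g c) {n : ℕ} (hn : n < N) :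
    g (n + 1) \ g n ⊆ z := by
  intro x hx
  rw [← hC.2.1]
  exact hC.mono (Nat.succ_le_of_lt hn) (Nat.le_refl N) hx.1

/-- Crucial: `z ∩ c n` is exactly the increment at stage `n`. -/
lemma CoverData.inter_cell (hC : CoverData S u z N g c) (hu : S.ESConfig u)
    {n : ℕ} (hn : n < N) : z ∩ c n = g (n + 1) \ g n := by
  obtain ⟨hsub, hcell, hΩ⟩ := hC.2.2 n hn
  apply Set.Subset.antisymm
  · rintro e ⟨hez, hec⟩
    refine omega_absorb (hC.config hu n (le_of_lt hn)) hcell hΩ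
      (hC.config hu N (Nat.le_refl N)) ?_ ?_ ?_ hec
    · rintro x (hx | hx)
      · exact Or.inl hx
      · exact Or.inr (hC.mono (le_of_lt hn) (Nat.le_refl N) hx)
    · intro x hx
      exact Or.inr (hC.2.1 ▸ hC.diff_subset hn hx)
    · exact Or.inr (hC.2.1 ▸ hez)
  · intro x hx
    exact ⟨hC.diff_subset hn hx, hΩ.2.1 hx⟩

/-- Cells used at different stages of one decomposition are disjoint. -/
lemma CoverData.cells_disj (hC : CoverData S u z N g c) (hu : S.ESConfig u)
    {m n : ℕ} (hmn : m < n) (hn : n < N) : c m ∩ c n = ∅ := by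
  by_contra h
  obtain ⟨e, hem, hen⟩ := Set.nonempty_iff_ne_empty.2 h
  have hm : m < N := hmn.trans hn
  obtain ⟨hsubm, hcellm, hΩm⟩ := hC.2.2 m hm
  obtain ⟨hsubn, hcelln, hΩn⟩ := hC.2.2 n hn
  have hefut : e ∈ S.futE (u ∪ g n) := hcelln.1.1.1 hen
  have hX : S.ESConfig ((u ∪ g n) ∪ S.down e) := hefut.2
  have hgmn : g m ⊆ g n := hC.mono (le_of_lt hmn) (le_of_lt hn)
  have hωgn : g (m + 1) \ g m ⊆ g n := fun x hx =>
    hC.mono (Nat.succ_le_of_lt hmn) (le_of_lt hn) hx.1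
  have : e ∈ g (m + 1) \ g m := by
    refine omega_absorb (hC.config hu m (le_of_lt hm)) hcellm hΩm hX ?_ ?_ ?_ hem
    · rintro x (hx | hx)
      · exact Or.inl (Or.inl hx)
      · exact Or.inl (Or.inr (hgmn hx))
    · intro x hx
      exact Or.inl (Or.inr (hωgn hx))
    · exact Or.inr (down_mem_self e)
  exact hefut.1 (Or.inr (hωgn this))

lemma CoverData.injOn (hC : CoverData S u z N g c) (hu : S.ESConfig u) :
    Set.InjOn c {n | n < N} := by
  intro m hm n hn heq
  by_contra hne
  rcases Nat.lt_or_ge m n with h | h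
  · obtain ⟨e, he⟩ := (hC.2.2 m hm).2.1.2.1
    have : e ∈ c m ∩ c n := ⟨he, heq ▸ he⟩
    rw [hC.cells_disj hu h hn] at this
    exact this
  · have h' : n < m := Nat.lt_of_le_of_ne h (fun a => hne a.symm)
    obtain ⟨e, he⟩ := (hC.2.2 n hn).2.1.2.1
    have : e ∈ c n ∩ c m := ⟨he, heq ▸ he⟩
    rw [hC.cells_disj hu h' hm] at this
    exact this

/-- **Exchange lemma**: a cell `cs` enabled at `u` with `z ∩ cs` maximal in it can be
moved to the front of any decomposition of `z`. -/
lemma CoverData.exchange (q : Set E → Set E → ℝ) (hC : CoverData S u z N g c)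
    (hu : S.ESConfig u) {cs ω : Set E} (hcell : S.cellAt u cs)
    (hΩ : S.OmegaAt u cs ω) (hz : z ∩ cs = ω) :
    ∃ g' c', CoverData S (u ∪ ω) (z \ ω) (N - 1) g' c' ∧
      seqProd q N g c = q cs ω * seqProd q (N - 1) g' c' := by
  classical
  have hωne : ω.Nonempty := omega_nonempty hu hcell hΩ
  obtain ⟨e, heω⟩ := hωne
  have hez : e ∈ z := by rw [← hz] at heω; exact heω.1
  -- N is positive
  have hNpos : 0 < N := by
    rcases Nat.eq_zero_or_pos N with h | h
    · exfalso
      have : g N = z := hC.2.1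
      rw [h, hC.1] at this
      rw [← this] at hez
      exact hez
    · exact h
  obtain ⟨M, rfl⟩ : ∃ M, N = M + 1 := ⟨N - 1, (Nat.succ_pred_eq_of_pos hNpos).symm⟩
  -- the first stage whose increment meets cs
  have hKne : {n | n < M + 1 ∧ ((g (n+1) \ g n) ∩ cs).Nonempty}.Nonempty := by
    have hgM : e ∈ g (M + 1) := by rw [hC.2.1]; exact hez
    have h2 : {n | e ∈ g (n+1)}.Nonempty := ⟨M, hgM⟩
    set k0 := sInf {n | e ∈ g (n+1)} with hk0
    have hk0m : e ∈ g (k0 + 1) := Nat.sInf_mem h2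
    have hk0le : k0 ≤ M := Nat.sInf_le hgM
    have hk0n : e ∉ g k0 := by
      rcases Nat.eq_zero_or_pos k0 with h | h
      · rw [h, hC.1]; exact Set.notMem_empty e
      · intro hmem
        have : k0 - 1 ∈ {n | e ∈ g (n+1)} := by
          rw [Set.mem_setOf_eq, show k0 - 1 + 1 = k0 from by omega]; exact hmem
        have := Nat.sInf_le this
        omega
    refine ⟨k0, Nat.lt_succ_of_le hk0le, e, ⟨hk0m, hk0n⟩, ?_⟩
    rw [← hz] at heω; exact heω.2
  set k := sInf {n | n < M + 1 ∧ ((g (n+1) \ g n) ∩ cs).Nonempty} with hkdef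
  obtain ⟨hkN, hkne⟩ := Nat.sInf_mem hKne
  have hbefore : ∀ i < k, (g (i+1) \ g i) ∩ cs = ∅ := by
    intro i hik
    by_contra h
    have : i ∈ {n | n < M + 1 ∧ ((g (n+1) \ g n) ∩ cs).Nonempty} :=
      ⟨hik.trans hkN, Set.nonempty_iff_ne_empty.2 h⟩
    have := Nat.sInf_le this
    omega
  -- invariant: cs stays a cell with the same maximal configurations up to stage k
  have hInv : ∀ i ≤ k, S.cellAt (u ∪ g i) cs ∧
      (∀ w, S.OmegaAt (u ∪ g i) cs w ↔ S.OmegaAt u cs w) := by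
    intro i hik
    induction i with
    | zero =>
      rw [hC.1, Set.union_empty]
      exact ⟨hcell, fun w => Iff.rfl⟩
    | succ j ih =>
      have hjk : j < k := Nat.lt_of_succ_le hik
      have hjN : j < M + 1 := hjk.trans hkN
      obtain ⟨ihc, ihΩ⟩ := ih (le_of_lt hjk)
      obtain ⟨hsub, hcellj, hΩj⟩ := hC.2.2 j hjN
      have hnej : c j ≠ cs := by
        intro heq
        have hωjne := omega_nonempty (hC.config hu j (le_of_lt hjN)) hcellj hΩj
        obtain ⟨x, hx⟩ := hωjne
        have : x ∈ (g (j+1) \ g j) ∩ cs := ⟨hx, heq ▸ hΩj.2.1 hx⟩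
        rw [hbefore j hjk] at this
        exact this
      have := stability (hC.config hu j (le_of_lt hjN)) ihc hcellj
        (fun h => hnej h.symm) hΩj
      rw [hC.step_eq hjN] at this
      exact ⟨this.1, fun w => (this.2 w).trans (ihΩ w)⟩
  -- cs is the cell used at stage k
  have hck : c k = cs := by
    obtain ⟨x, hx1, hx2⟩ := hkne
    obtain ⟨hsub, hcellk, hΩk⟩ := hC.2.2 k hkN
    by_contra hne
    have hd := cells_disjoint hcellk ((hInv k (Nat.le_refl k)).1) hne
    exact absurd (Set.mem_inter (hΩk.2.1 hx1) hx2) (by rw [hd]; exact Set.notMem_empty x)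
  have hωk : g (k+1) \ g k = ω := by
    have := hC.inter_cell hu hkN
    rw [hck, hz] at this
    exact this.symm
  obtain ⟨hsubk, hcellk, hΩk⟩ := hC.2.2 k hkN
  have hΩ' : ∀ i ≤ k, S.OmegaAt (u ∪ g i) cs ω :=
    fun i hik => ((hInv i hik).2 ω).mpr hΩ
  have hωsub : ω ⊆ g (k+1) := by rw [← hωk]; exact fun x hx => hx.1
  have hωdisj : ∀ i ≤ k, ∀ x ∈ ω, x ∉ g i := by
    intro i hik x hx hxg
    rw [← hωk] at hx
    exact hx.2 (hC.mono hik (le_of_lt hkN) hxg)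
  have hgk : g (k+1) \ ω = g k := by
    ext x
    constructor
    · rintro ⟨hx1, hx2⟩
      by_contra hxk
      exact hx2 (hωk ▸ (⟨hx1, hxk⟩ : x ∈ g (k+1) \ g k))
    · intro hx
      exact ⟨hsubk hx, fun hxω => hωdisj k (Nat.le_refl k) x hxω hx⟩
  set g2 : ℕ → Set E := fun i => if i ≤ k then g i else g (i+1) \ ω with hg2def
  set c2 : ℕ → Set E := fun i => if i < k then c i else c (i+1) with hc2def
  have hg2lo : ∀ i, i ≤ k → g2 i = g i := fun i h => if_pos h
  have hg2ge : ∀ i, k ≤ i → g2 i = g (i+1) \ ω := by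
    intro i h
    rcases Nat.eq_or_lt_of_le h with h' | h'
    · rw [← h', hg2lo k (Nat.le_refl k), hgk]
    · exact if_neg (by omega)
  have hc2lo : ∀ i, i < k → c2 i = c i := fun i h => if_pos h
  have hc2ge : ∀ i, k ≤ i → c2 i = c (i+1) := fun i h => if_neg (by omega)
  have hbase : ∀ n, k ≤ n → n ≤ M → (u ∪ ω) ∪ (g (n+1) \ ω) = u ∪ g (n+1) := by
    intro n h1 h2
    rw [Set.union_assoc,
      Set.union_diff_cancel (hωsub.trans (hC.mono (by omega) (by omega)))]
  have hdiff : ∀ n, k ≤ n → n + 1 ≤ M →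
      (g (n+2) \ ω) \ (g (n+1) \ ω) = g (n+2) \ g (n+1) := by
    intro n h1 h2
    have hωn1 : ω ⊆ g (n+1) := hωsub.trans (hC.mono (by omega) (by omega))
    ext x
    constructor
    · rintro ⟨⟨hx1, hx2⟩, hx3⟩
      exact ⟨hx1, fun h => hx3 ⟨h, hx2⟩⟩
    · rintro ⟨hx1, hx2⟩
      exact ⟨⟨hx1, fun h => hx2 (hωn1 h)⟩, fun h => hx2 h.1⟩
  refine ⟨g2, c2, ⟨?_, ?_, ?_⟩, ?_⟩
  · rw [hg2lo 0 (Nat.zero_le k), hC.1]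
  · rw [Nat.add_sub_cancel, hg2ge M (by omega), hC.2.1]
  · -- the steps of the exchanged decomposition
    rw [Nat.add_sub_cancel]
    intro n hn
    rcases Nat.lt_or_ge n k with hnk | hkn
    · rw [hg2lo n (by omega), hg2lo (n+1) (by omega), hc2lo n hnk]
      have hnN : n < M + 1 := by omega
      obtain ⟨hsub, hcelln, hΩn⟩ := hC.2.2 n hnN
      have hnecs : c n ≠ cs := by
        intro heq
        obtain ⟨x, hx⟩ := omega_nonempty (hC.config hu n (by omega)) hcelln hΩn
        have : x ∈ (g (n+1) \ g n) ∩ cs := ⟨hx, heq ▸ hΩn.2.1 hx⟩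
        rw [hbefore n hnk] at this
        exact this
      have hst := stability (hC.config hu n (by omega)) hcelln
        ((hInv n (by omega)).1) hnecs (hΩ' n (by omega))
      have hcomm : (u ∪ g n) ∪ ω = (u ∪ ω) ∪ g n := Set.union_right_comm u (g n) ω
      refine ⟨hsub, ?_, ?_⟩
      · rw [← hcomm]; exact hst.1
      · rw [← hcomm]; exact (hst.2 _).mpr hΩn
    · rw [hg2ge n hkn, hg2ge (n+1) (by omega), hc2ge n hkn]
      obtain ⟨hsub1, hcell1, hΩ1⟩ := hC.2.2 (n+1) (by omega)
      rw [hdiff n hkn (by omega), hbase n hkn (by omega)]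
      exact ⟨fun x hx => ⟨hsub1 hx.1, hx.2⟩, hcell1, hΩ1⟩
  · -- the product identity
    rw [Nat.add_sub_cancel]
    obtain ⟨m, hMm⟩ : ∃ m, M = k + m := ⟨M - k, by omega⟩
    rw [hMm] at hC ⊢
    have hkm : ∀ P : Prop, (k ≤ k + m → P) → P := fun P h => h (by omega)
    have hL : seqProd q (k + m + 1) g c =
        ((∏ i ∈ Finset.range k, q (c i) (g (i+1) \ g i)) * q (c k) (g (k+1) \ g k)) *
          ∏ i ∈ Finset.range m, q (c (k+1+i)) (g (k+1+i+1) \ g (k+1+i)) := by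
      unfold seqProd
      rw [show k + m + 1 = k + 1 + m from by omega, Finset.prod_range_add,
        Finset.prod_range_succ]
    have hR : seqProd q (k + m) g2 c2 =
        (∏ i ∈ Finset.range k, q (c i) (g (i+1) \ g i)) *
          ∏ i ∈ Finset.range m, q (c (k+1+i)) (g (k+1+i+1) \ g (k+1+i)) := by
      unfold seqProd
      rw [Finset.prod_range_add]
      congr 1
      · refine Finset.prod_congr rfl (fun i hi => ?_)
        rw [Finset.mem_range] at hi
        rw [hc2lo i hi, hg2lo i (by omega), hg2lo (i+1) (by omega)]
      · refine Finset.prod_congr rfl (fun i hi => ?_)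
        rw [Finset.mem_range] at hi
        rw [hc2ge (k+i) (by omega), hg2ge (k+i+1) (by omega), hg2ge (k+i) (by omega),
          show k+1+i = k+i+1 from by omega, show k+i+1+1 = k+i+2 from by omega,
          hdiff (k+i) (by omega) (by omega)]
    rw [hL, hR, hck, hωk]
    ring

/-- **Invariance**: any two decompositions of the same configuration yield the same
likelihood product. -/
lemma cover_prod_unique (q : Set E → Set E → ℝ) :
    ∀ N : ℕ, ∀ u z : Set E, ∀ g c g' c' : ℕ → Set E, ∀ N' : ℕ,
      S.ESConfig u → CoverData S u z N g c → CoverData S u z N' g' c' →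
      seqProd q N g c = seqProd q N' g' c' := by
  intro N
  induction N using Nat.strong_induction_on with
  | _ N ih =>
    intro u z g c g' c' N' hu hC hC'
    rcases Nat.eq_zero_or_pos N with hN | hN
    · have hz : z = ∅ := by rw [← hC.2.1, hN, hC.1]
      rcases Nat.eq_zero_or_pos N' with hN' | hN'
      · rw [hN, hN']; simp [seqProd]
      · exfalso
        obtain ⟨hsub, hcell, hΩ⟩ := hC'.2.2 0 hN'
        have hb : u ∪ g' 0 = u := by rw [hC'.1, Set.union_empty]
        rw [hb] at hcell hΩ
        obtain ⟨x, hx⟩ := omega_nonempty hu hcell hΩ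
        have : x ∈ z := hC'.diff_subset hN' hx
        rw [hz] at this
        exact this
    · rcases Nat.eq_zero_or_pos N' with hN' | hN'
      · exfalso
        have hz : z = ∅ := by rw [← hC'.2.1, hN', hC'.1]
        obtain ⟨hsub, hcell, hΩ⟩ := hC.2.2 0 hN
        have hb : u ∪ g 0 = u := by rw [hC.1, Set.union_empty]
        rw [hb] at hcell hΩ
        obtain ⟨x, hx⟩ := omega_nonempty hu hcell hΩ
        have : x ∈ z := hC.diff_subset hN hx
        rw [hz] at this
        exact this
      · obtain ⟨hsub0, hcell0, hΩ0⟩ := hC'.2.2 0 hN'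
        have hb : u ∪ g' 0 = u := by rw [hC'.1, Set.union_empty]
        rw [hb] at hcell0 hΩ0
        have hzcap : z ∩ c' 0 = g' (0+1) \ g' 0 := hC'.inter_cell hu hN'
        obtain ⟨g₁, c₁, hC1, hp1⟩ := hC.exchange q hu hcell0 hΩ0 hzcap
        obtain ⟨g₂, c₂, hC2, hp2⟩ := hC'.exchange q hu hcell0 hΩ0 hzcap
        have hu' : S.ESConfig (u ∪ (g' (0+1) \ g' 0)) := hΩ0.1.2
        have heq := ih (N - 1) (by omega) (u ∪ (g' (0+1) \ g' 0))
          (z \ (g' (0+1) \ g' 0)) g₁ c₁ g₂ c₂ (N' - 1) hu' hC1 hC2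
        rw [hp1, hp2, heq]

/-- Conversion between the finprod over the covering and the sequential product. -/
lemma CoverData.finprod_eq (hC : CoverData S u z N g c) (hu : S.ESConfig u)
    (q : Set E → Set E → ℝ) {z' : Set E}
    (hz' : ∀ n, n < N → z' ∩ c n = g (n+1) \ g n) :
    ∏ᶠ B ∈ c '' {n | n < N}, q B (z' ∩ B) = seqProd q N g c := by
  rw [finprod_mem_image (hC.injOn hu)]
  have hset : {n | n < N} = ↑(Finset.range N) := by
    ext n; simp [Finset.mem_range]
  rw [hset, finprod_mem_coe_finset]
  exact Finset.prod_congr rfl (fun n hn => by rw [hz' n (Finset.mem_range.1 hn)])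

end Cover

/-- Concatenation of decompositions. -/
lemma cover_concat {v w : Set E} {N₁ N₂ : ℕ} {g₁ c₁ g₂ c₂ : ℕ → Set E}
    (h1 : CoverData S ∅ v N₁ g₁ c₁) (h2 : CoverData S v w N₂ g₂ c₂) :
    ∃ G C, CoverData S ∅ (v ∪ w) (N₁ + N₂) G C ∧
      ∀ q : Set E → Set E → ℝ,
        seqProd q (N₁ + N₂) G C = seqProd q N₁ g₁ c₁ * seqProd q N₂ g₂ c₂ := by
  classical
  set G : ℕ → Set E := fun i => if i ≤ N₁ then g₁ i else v ∪ g₂ (i - N₁) with hGdef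
  set C : ℕ → Set E := fun i => if i < N₁ then c₁ i else c₂ (i - N₁) with hCdef
  have hGlo : ∀ i, i ≤ N₁ → G i = g₁ i := fun i h => if_pos h
  have hClo : ∀ i, i < N₁ → C i = c₁ i := fun i h => if_pos h
  have hGsh : ∀ j, G (N₁ + j) = v ∪ g₂ j := by
    intro j
    rcases Nat.eq_zero_or_pos j with h | h
    · rw [h, Nat.add_zero, hGlo N₁ (Nat.le_refl N₁), h1.2.1, h2.1, Set.union_empty]
    · have h' : G (N₁ + j) = v ∪ g₂ (N₁ + j - N₁) := if_neg (by omega)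
      rw [show N₁ + j - N₁ = j from by omega] at h'
      exact h'
  have hCsh : ∀ j, C (N₁ + j) = c₂ j := by
    intro j
    have h' : C (N₁ + j) = c₂ (N₁ + j - N₁) := if_neg (by omega)
    rw [show N₁ + j - N₁ = j from by omega] at h'
    exact h'
  have hdiff : ∀ j, j < N₂ → (v ∪ g₂ (j+1)) \ (v ∪ g₂ j) = g₂ (j+1) \ g₂ j := by
    intro j hj
    ext x
    constructor
    · rintro ⟨hx1, hx2⟩
      rcases hx1 with hx1 | hx1
      · exact absurd (Or.inl hx1) hx2
      · exact ⟨hx1, fun h => hx2 (Or.inr h)⟩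
    · rintro ⟨hx1, hx2⟩
      have hfut : x ∈ S.futE (v ∪ g₂ j) := (h2.2.2 j hj).2.2.1.1 ⟨hx1, hx2⟩
      exact ⟨Or.inr hx1, hfut.1⟩
  have hstep : ∀ j, j < N₂ → G (N₁ + j + 1) = v ∪ g₂ (j + 1) := by
    intro j hj
    rw [Nat.add_assoc]
    exact hGsh (j + 1)
  refine ⟨G, C, ⟨?_, ?_, ?_⟩, ?_⟩
  · rw [hGlo 0 (Nat.zero_le N₁), h1.1]
  · rw [hGsh N₂, h2.2.1]
  · intro n hn
    rcases Nat.lt_or_ge n N₁ with h | h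
    · rw [hGlo n (by omega), hGlo (n+1) (by omega), hClo n h]
      exact h1.2.2 n h
    · obtain ⟨j, rfl⟩ : ∃ j, n = N₁ + j := ⟨n - N₁, by omega⟩
      have hj : j < N₂ := by omega
      rw [hGsh j, hstep j hj, hCsh j, hdiff j hj]
      obtain ⟨hsub, hcell, hΩ⟩ := h2.2.2 j hj
      rw [show v ∪ g₂ j = (∅ : Set E) ∪ (v ∪ g₂ j) from (Set.empty_union _).symm] at hcell hΩ
      refine ⟨?_, hcell, hΩ⟩
      rintro x (hx | hx)
      · exact Or.inl hx
      · exact Or.inr (hsub hx)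
  · intro q
    unfold seqProd
    rw [Finset.prod_range_add]
    congr 1
    · refine Finset.prod_congr rfl (fun i hi => ?_)
      rw [Finset.mem_range] at hi
      rw [hClo i hi, hGlo i (by omega), hGlo (i+1) (by omega)]
    · refine Finset.prod_congr rfl (fun i hi => ?_)
      rw [Finset.mem_range] at hi
      rw [hCsh i, hstep i hi, hGsh i, hdiff i hi]

lemma config_empty : S.ESConfig (∅ : Set E) :=
  ⟨fun e he => absurd he (Set.notMem_empty e),
   fun e he => absurd he (Set.notMem_empty e)⟩

end ES
/-- in a locally finite, locally randomised event structure (each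
branching cell `c` carries a probability distribution `q c` on its maximal
configurations `Ω_c`), the likelihood function `p(v) = ∏_{c ∈ Δ(v)} q_c(v ∩ c)` is
multiplicative over concatenation: `p(v ⊕ w) = p(v) · p_{E^v}(w)`. -/
theorem likelihood_multiplicative {E : Type u} (S : ES E)
    (hLF : S.LocallyFinite) (q : Set E → Set E → ℝ)
    (hq : ∀ u B, S.RStoppedIn ∅ u → S.cellAt u B →
      (∀ w, 0 ≤ q B w) ∧
      HasSum (fun w : {w : Set E // S.OmegaAt u B w} => q B w.1) 1)
    (v w : Set E) (Dv Dw Dvw : Set (Set E))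
    (hv : S.RStoppedIn ∅ v) (hvfin : v.Finite)
    (hw : S.RStoppedIn v w) (hwfin : w.Finite)
    (hDv : S.CoverIn ∅ v Dv) (hDw : S.CoverIn v w Dw)
    (hDvw : S.CoverIn ∅ (v ∪ w) Dvw) :
    ∏ᶠ c ∈ Dvw, q c ((v ∪ w) ∩ c) =
      (∏ᶠ c ∈ Dv, q c (v ∩ c)) * ∏ᶠ c ∈ Dw, q c (w ∩ c) := by
  obtain ⟨N₁, g₁, c₁, hC1, hD1⟩ := ES.coverIn_iff.1 hDv
  obtain ⟨N₂, g₂, c₂, hC2, hD2⟩ := ES.coverIn_iff.1 hDw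
  obtain ⟨N₃, g₃, c₃, hC3, hD3⟩ := ES.coverIn_iff.1 hDvw
  have hemp : S.ESConfig (∅ : Set E) := ES.config_empty
  have hvcfg : S.ESConfig v := by
    have := hC1.config hemp N₁ (Nat.le_refl N₁)
    rwa [hC1.2.1, Set.empty_union] at this
  obtain ⟨G, C, hCc, hprod⟩ := ES.cover_concat hC1 hC2
  rw [hD1, hD2, hD3,
    hC3.finprod_eq hemp q (fun n hn => hC3.inter_cell hemp hn),
    hC1.finprod_eq hemp q (fun n hn => hC1.inter_cell hemp hn),
    hC2.finprod_eq hvcfg q (fun n hn => hC2.inter_cell hvcfg hn),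
    ES.cover_prod_unique q N₃ ∅ (v ∪ w) g₃ c₃ G C (N₁ + N₂) hemp hC3 hCc,
    hprod q]
end
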